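/- arXiv:0705.1835 — 2 statements merged into one kernel-verified Lean document; each statement's English description precedes it below -/
import Mathlib

section
/- The boundary of the tetrahedron is the only root possessing a 3-valent vertex. -/
namespace Tri

/-- A (pure 2-dimensional) simplicial complex, given by its set of triangles
(each triangle is a 3-element finset of vertex labels). -/
abbrev Complex := Finset (Finset ℕ)

/-- The vertices of a complex. -/
def vertices (K : Complex) : Finset ℕ := K.biUnion id

/-- The edges of a complex: 2-element subsets of triangles. -/
def edges (K : Complex) : Finset (Finset ℕ) := K.biUnion fun t => t.powersetCard 2

/-- The valence of a vertex: the number of triangles containing it. -/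
def valence (K : Complex) (v : ℕ) : ℕ := (K.filter (fun t => v ∈ t)).card

/-- The maximal vertex-valence of a complex. -/
def mv (K : Complex) : ℕ := (vertices K).sup (valence K)

/-- Euler characteristic V - E + T. -/
def eulerChar (K : Complex) : ℤ :=
  ((vertices K).card : ℤ) - (edges K).card + K.card

/-- Two triangles of `K` both containing `v` and sharing an edge. -/
def adjAt (K : Complex) (v : ℕ) (t₁ t₂ : Finset ℕ) : Prop :=
  t₁ ∈ K ∧ t₂ ∈ K ∧ v ∈ t₁ ∧ v ∈ t₂ ∧ (t₁ ∩ t₂).card = 2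

/-- Two triangles of `K` sharing an edge. -/
def adj (K : Complex) (t₁ t₂ : Finset ℕ) : Prop :=
  t₁ ∈ K ∧ t₂ ∈ K ∧ (t₁ ∩ t₂).card = 2

/-- A triangulation of a connected compact surface, possibly with boundary:
every triangle has 3 vertices, every edge lies in at most two triangles,
the triangles around every vertex are connected via edges through that vertex
(so every vertex link is a path or a circle), and the complex is connected. -/
structure IsSurface (K : Complex) : Prop where
  nonempty : K.Nonempty
  card3 : ∀ t ∈ K, t.card = 3
  edge_le : ∀ e ∈ edges K, (K.filter (fun t => e ⊆ t)).card ≤ 2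
  link_conn : ∀ v, ∀ t₁ ∈ K, ∀ t₂ ∈ K, v ∈ t₁ → v ∈ t₂ →
    Relation.ReflTransGen (adjAt K v) t₁ t₂
  conn : ∀ t₁ ∈ K, ∀ t₂ ∈ K, Relation.ReflTransGen (adj K) t₁ t₂

/-- A triangulation of a closed (connected compact) surface: every edge lies
in exactly two triangles. -/
def IsClosedSurface (K : Complex) : Prop :=
  IsSurface K ∧ ∀ e ∈ edges K, (K.filter (fun t => e ⊆ t)).card = 2

/-- Boundary edges: edges lying in exactly one triangle. -/
def bdryEdges (K : Complex) : Finset (Finset ℕ) :=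
  (edges K).filter (fun e => (K.filter (fun t => e ⊆ t)).card = 1)

/-- Boundary vertices. -/
def bdryVertices (K : Complex) : Finset ℕ := (bdryEdges K).biUnion id

/-- Interior vertices. -/
def intVertices (K : Complex) : Finset ℕ := vertices K \ bdryVertices K

/-- A triangulated disc: a connected compact surface with nonempty boundary and
Euler characteristic 1. -/
def IsDisc (K : Complex) : Prop :=
  IsSurface K ∧ eulerChar K = 1 ∧ (bdryEdges K).Nonempty

/-- Two edges sharing a vertex. -/
def edgeAdj (E : Complex) (e₁ e₂ : Finset ℕ) : Prop :=
  e₁ ∈ E ∧ e₂ ∈ E ∧ (e₁ ∩ e₂).Nonempty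

/-- A set of edges forming a triangulated circle. -/
def IsCircle (E : Complex) : Prop :=
  E.Nonempty ∧ (∀ e ∈ E, e.card = 2) ∧
  (∀ v ∈ E.biUnion id, (E.filter (fun e => v ∈ e)).card = 2) ∧
  ∀ e₁ ∈ E, ∀ e₂ ∈ E, Relation.ReflTransGen (edgeAdj E) e₁ e₂

/-- Simplicial isomorphism (re-labeling). -/
def Iso (K₁ K₂ : Complex) : Prop :=
  ∃ f : ℕ → ℕ, Set.InjOn f (vertices K₁) ∧ K₁.image (Finset.image f) = K₂

/-- The boundary of the tetrahedron. -/
def tetra : Complex := {{1,2,3},{1,2,4},{1,3,4},{2,3,4}}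

/-- The boundary of the octahedron. -/
def octa : Complex := {{1,2,3},{1,2,4},{1,3,5},{1,4,5},{2,3,6},{2,4,6},{3,5,6},{4,5,6}}

/-- The vertices of the link of a vertex. -/
def linkV (K : Complex) (v : ℕ) : Finset ℕ :=
  ((K.filter (fun t => v ∈ t)).biUnion id).erase v

/-- The result of the inverse T-move removing the vertex `v`. -/
def invT (K : Complex) (v : ℕ) : Complex :=
  insert (linkV K v) (K.filter (fun t => v ∉ t))

/-- `K'` is obtained from `K` by an inverse T-move: a 3-valent vertex whose
link does not bound a triangle is removed. -/
def InvTStep (K K' : Complex) : Prop :=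
  ∃ v, valence K v = 3 ∧ linkV K v ∉ K ∧ K' = invT K v

/-- A root: a closed triangulated surface admitting no inverse T-move. -/
def IsRoot (K : Complex) : Prop := IsClosedSurface K ∧ ∀ K', ¬ InvTStep K K'

/-- `R` is a root of `K`: obtained from `K` by inverse T-moves, with no
further inverse T-move applicable. -/
def IsRootOf (R K : Complex) : Prop :=
  Relation.ReflTransGen InvTStep K R ∧ ∀ R', ¬ InvTStep R R'

/-- The directed edges of an ordered triangle. -/
def dedges (p : ℕ × ℕ × ℕ) : Finset (ℕ × ℕ) := {(p.1, p.2.1), (p.2.1, p.2.2), (p.2.2, p.1)}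

/-- Orientability: a coherent choice of cyclic orders on the triangles,
i.e. no directed edge is shared by two distinct triangles. -/
def Orientable (K : Complex) : Prop :=
  ∃ o : Finset ℕ → ℕ × ℕ × ℕ,
    (∀ t ∈ K, ({(o t).1, (o t).2.1, (o t).2.2} : Finset ℕ) = t) ∧
    ∀ t₁ ∈ K, ∀ t₂ ∈ K, t₁ ≠ t₂ → ∀ p ∈ dedges (o t₁), p ∉ dedges (o t₂)

/-- Two closed triangulated surfaces triangulate the same surface iff they
have the same Euler characteristic and the same orientability. -/
def SameSurface (K₁ K₂ : Complex) : Prop :=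
  eulerChar K₁ = eulerChar K₂ ∧ (Orientable K₁ ↔ Orientable K₂)

/-- The intersection of two subcomplexes is a triangulated circle or empty. -/
def CircleInter (A B : Complex) : Prop :=
  (IsCircle (edges A ∩ edges B) ∨ edges A ∩ edges B = ∅) ∧
  vertices A ∩ vertices B = (edges A ∩ edges B).biUnion id

/-- A decomposition `(G, D, Ds)` of a closed triangulated surface `K`. -/
structure IsDecomp (K G D : Complex) (Ds : Finset Complex) : Prop where
  closed : IsClosedSurface K
  subG : G ⊆ K
  subD : D ⊆ K
  subDs : ∀ Di ∈ Ds, Di ⊆ K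
  surfG : IsSurface G
  discD : IsDisc D
  discDs : ∀ Di ∈ Ds, IsDisc Di
  maxv : ∃ v ∈ intVertices D, valence K v = mv K
  cover : G ∪ D ∪ Ds.sup id = K
  disjGD : Disjoint G D
  disjGDs : ∀ Di ∈ Ds, Disjoint G Di
  disjDDs : ∀ Di ∈ Ds, Disjoint D Di
  disjDsDs : ∀ Di ∈ Ds, ∀ Dj ∈ Ds, Di ≠ Dj → Disjoint Di Dj
  interGD : CircleInter G D
  interGDs : ∀ Di ∈ Ds, CircleInter G Di
  interDDs : ∀ Di ∈ Ds, CircleInter D Di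
  interDsDs : ∀ Di ∈ Ds, ∀ Dj ∈ Ds, Di ≠ Dj → CircleInter Di Dj

/-- A minimal decomposition: the genus-surface has the fewest triangles. -/
def IsMinDecomp (K G D : Complex) (Ds : Finset Complex) : Prop :=
  IsDecomp K G D Ds ∧ ∀ G' D' Ds', IsDecomp K G' D' Ds' → G.card ≤ G'.card

/-!
In a root, the link `L` of a 3-valent vertex `v` is itself a triangle, for otherwise an inverse
T-move applies. The three triangles around `v` are then `insert v p` for the three edges `p` of `L`,
so `K` contains every 3-subset of `insert v L`: a copy of the tetrahedron boundary. Each edge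
of this copy already lies in two of its triangles, and an edge of a surface lies in at most two,
so no further triangle of `K` is adjacent to the copy; by connectedness it is all of `K`.
-/

open Finset

theorem IsSurface.eq_of_subset_of_forall_edge_card_eq_two {K M : Complex} (hK : IsSurface K)
    (hMK : M ⊆ K) (hM : M.Nonempty) (hMe : ∀ e ∈ edges M, #(M.filter (e ⊆ ·)) = 2) :
    M = K := by
  refine hMK.antisymm fun t ht => ?_
  obtain ⟨t₀, ht₀⟩ := hM
  have hconn := hK.conn t₀ (hMK ht₀) t ht
  clear ht
  induction hconn with
  | refl => exact ht₀
  | @tail t₁ t₂ _ hadj ht₁ =>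
    obtain ⟨-, ht₂, hcard⟩ := hadj
    have hedge : t₁ ∩ t₂ ∈ t₁.powersetCard 2 := mem_powersetCard.2 ⟨inter_subset_left, hcard⟩
    have hfilter : M.filter (t₁ ∩ t₂ ⊆ ·) = K.filter (t₁ ∩ t₂ ⊆ ·) := by
      refine eq_of_subset_of_card_le (filter_subset_filter _ hMK) ?_
      rw [hMe _ (mem_biUnion.2 ⟨t₁, ht₁, hedge⟩)]
      exact hK.edge_le _ (mem_biUnion.2 ⟨t₁, hMK ht₁, hedge⟩)
    have ht₂ : t₂ ∈ M.filter (t₁ ∩ t₂ ⊆ ·) := hfilter ▸ mem_filter.2 ⟨ht₂, inter_subset_right⟩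
    exact (mem_filter.1 ht₂).1

theorem notMem_linkV_self (K : Complex) (v : ℕ) : v ∉ linkV K v :=
  notMem_erase v _

theorem card_filter_powersetCard_three_of_mem_edges {σ e : Finset ℕ} (hσ : #σ = 4)
    (he : e ∈ edges (σ.powersetCard 3)) : #((σ.powersetCard 3).filter (e ⊆ ·)) = 2 := by
  obtain ⟨t, ht, het⟩ := mem_biUnion.1 he
  rw [mem_powersetCard] at ht het
  rw [card_filter_powersetCard_subset e σ 3 (het.1.trans ht.1) (by omega), hσ, het.2]
  rfl

theorem powersetCard_two_linkV_subset_image_erase {K : Complex} {v : ℕ} (hK : IsSurface K)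
    (hv : valence K v = 3) (hL : linkV K v ∈ K) :
    (linkV K v).powersetCard 2 ⊆ (K.filter (v ∈ ·)).image (fun t => t.erase v) := by
  have hmaps : ∀ t ∈ K.filter (v ∈ ·), t.erase v ∈ (linkV K v).powersetCard 2 := by
    intro t ht
    obtain ⟨htK, hvt⟩ := mem_filter.1 ht
    refine mem_powersetCard.2 ⟨fun x hx => ?_, by rw [card_erase_of_mem hvt, hK.card3 t htK]⟩
    exact mem_erase.2 ⟨(mem_erase.1 hx).1, mem_biUnion.2 ⟨t, ht, (mem_erase.1 hx).2⟩⟩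
  have hinj : Set.InjOn (fun t : Finset ℕ => t.erase v) ↑(K.filter (v ∈ ·)) :=
    (erase_injOn' v).mono fun t ht => (mem_filter.1 ht).2
  refine (eq_of_subset_of_card_le (image_subset_iff.2 hmaps) ?_).symm.subset
  rw [card_powersetCard, hK.card3 _ hL, card_image_of_injOn hinj]
  exact hv.ge

theorem insert_linkV_powersetCard_three_subset {K : Complex} {v : ℕ} (hK : IsSurface K)
    (hv : valence K v = 3) (hL : linkV K v ∈ K) :
    (insert v (linkV K v)).powersetCard 3 ⊆ K := by
  rw [show 3 = Nat.succ 2 from rfl, powersetCard_succ_insert (notMem_linkV_self K v),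
    union_subset_iff]
  change (linkV K v).powersetCard 3 ⊆ K ∧ _
  rw [← hK.card3 _ hL, powersetCard_self, singleton_subset_iff]
  refine ⟨hL, fun t ht => ?_⟩
  obtain ⟨p, hp, rfl⟩ := mem_image.1 ht
  obtain ⟨s, hs, rfl⟩ := mem_image.1 (powersetCard_two_linkV_subset_image_erase hK hv hL hp)
  obtain ⟨hsK, hvs⟩ := mem_filter.1 hs
  rwa [insert_erase hvs]

theorem iso_powersetCard_of_card_eq {s t : Finset ℕ} (h : #s = #t) (k : ℕ) :
    Iso (s.powersetCard k) (t.powersetCard k) := by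
  let g : Equiv.Perm ℕ := (Fintype.equivOfCardEq (by simpa using h) : s ≃ t).extendSubtype
  have hg : s.map g.toEmbedding = t := by
    refine eq_of_subset_of_card_le (fun y hy => ?_) (by rw [card_map, h])
    obtain ⟨x, hx, rfl⟩ := mem_map.1 hy
    exact Equiv.extendSubtype_mem _ x hx
  refine ⟨g, g.injective.injOn, ?_⟩
  rw [← hg, powersetCard_map, map_eq_image]
  exact image_congr fun u _ => by
    rw [RelEmbedding.coe_toEmbedding, mapEmbedding_apply, map_eq_image]
    rfl

theorem tetra_eq_powersetCard : tetra = ({1, 2, 3, 4} : Finset ℕ).powersetCard 3 := by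
  decide

/-- the tetrahedron boundary is the only root with a
3-valent vertex. -/
theorem root_with_three_valent_is_tetra (K : Complex) (h : IsRoot K)
    (hv : ∃ v ∈ vertices K, valence K v = 3) : Iso K tetra := by
  obtain ⟨v, -, hv3⟩ := hv
  obtain ⟨⟨hK, -⟩, hroot⟩ := h
  have hL : linkV K v ∈ K := not_not.1 fun hL => hroot _ ⟨v, hv3, hL, rfl⟩
  have hσ : #(insert v (linkV K v)) = 4 := by
    rw [card_insert_of_notMem (notMem_linkV_self K v), hK.card3 _ hL]
  have hKσ : (insert v (linkV K v)).powersetCard 3 = K :=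
    hK.eq_of_subset_of_forall_edge_card_eq_two (insert_linkV_powersetCard_three_subset hK hv3 hL)
      (powersetCard_nonempty.2 (by omega)) fun e he =>
        card_filter_powersetCard_three_of_mem_edges hσ he
  rw [← hKσ, tetra_eq_powersetCard]
  exact iso_powersetCard_of_card_eq (by rw [hσ]; rfl) 3

end Tri
end

section
/- Every closed surface admits infinitely many roots: for each closed surface S and each n there is a root of S (a triangulation with no applicable inverse T-move) with more than n vertices. -/
namespace Tri

/-!
The roots are iterated barycentric subdivisions. Subdividing a closed surface `K` gives a
closed surface with `V + E + T` vertices, `6T` triangles and (since `2E = 3T` on closed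
surfaces) the same Euler characteristic. Every vertex of the subdivision has even valence:
`2 · val v` at an old vertex `v`, twice the number of triangles at an edge, `6` at a face.
So no inverse T-move applies, while the number of vertices grows with each subdivision.

Orientability of `K` and of its subdivision are compared through signs on flags
`v ∈ {v, w} ⊆ t` that change whenever one entry of the flag changes: an orientation of `K`
gives the sign "`(v, w)` runs along the orientation of `t`", an orientation of the subdivision
gives the sign "the triangle of the flag is oriented vertex → edge → face".
-/

open Finset Relation

section General
variable {α : Type*} [DecidableEq α] {K : Complex}

lemma pair_eq_pair_iff {a b c d : α} :
    ({a, b} : Finset α) = {c, d} ↔ a = c ∧ b = d ∨ a = d ∧ b = c := by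
  rw [← coe_inj]
  push_cast
  exact Set.pair_eq_pair_iff

lemma card_inter_eq_two {s₁ s₂ : Finset α} (h₁ : s₁.card = 3) (h₂ : s₂.card = 3)
    (hne : s₁ ≠ s₂) {x y : α} (hx₁ : x ∈ s₁) (hx₂ : x ∈ s₂) (hy₁ : y ∈ s₁) (hy₂ : y ∈ s₂)
    (hxy : x ≠ y) : (s₁ ∩ s₂).card = 2 := by
  have hlow : 2 ≤ (s₁ ∩ s₂).card := by
    rw [← card_pair hxy]
    exact card_le_card (by simp [insert_subset_iff, *])
  have hup : (s₁ ∩ s₂).card < 3 := by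
    rw [← h₁]
    refine card_lt_card ⟨inter_subset_left, fun hsub => hne ?_⟩
    exact eq_of_subset_of_card_le (subset_inter_iff.1 hsub).2 (by omega)
  omega

lemma eq_pair_of_subset_triple {a b c : α} {e : Finset α} (h : e ⊆ {a, b, c}) (hc : e.card = 2) :
    e = {a, b} ∨ e = {a, c} ∨ e = {b, c} := by
  obtain ⟨x, y, hxy, rfl⟩ := card_eq_two.1 hc
  have hx : x ∈ ({a, b, c} : Finset α) := h (by simp)
  have hy : y ∈ ({a, b, c} : Finset α) := h (by simp)
  simp only [mem_insert, mem_singleton] at hx hy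
  rcases hx with rfl | rfl | rfl <;> rcases hy with rfl | rfl | rfl <;>
    simp_all [pair_comm]

lemma distinct_of_card_eq_three {a b c : α} (h : ({a, b, c} : Finset α).card = 3) :
    a ≠ b ∧ a ≠ c ∧ b ≠ c := by
  refine ⟨?_, ?_, ?_⟩ <;> rintro rfl
  · rw [insert_eq_of_mem (by simp)] at h
    exact ((card_le_two (a := a) (b := c)).trans_lt (by norm_num : 2 < 3)).ne h
  · rw [insert_eq_of_mem (by simp)] at h
    exact ((card_le_two (a := b) (b := a)).trans_lt (by norm_num : 2 < 3)).ne h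
  · rw [pair_eq_singleton] at h
    exact ((card_le_two (a := a) (b := b)).trans_lt (by norm_num : 2 < 3)).ne h

lemma mem_edges {e : Finset ℕ} : e ∈ edges K ↔ ∃ t ∈ K, e ⊆ t ∧ e.card = 2 := by
  simp [edges, mem_powersetCard]

lemma card_edges_mul_two (hK : IsClosedSurface K) : (edges K).card * 2 = K.card * 3 := by
  refine card_mul_eq_card_mul (· ⊆ ·) (fun e he => by simpa [bipartiteAbove] using hK.2 e he)
    fun t ht => ?_
  have : (edges K).bipartiteBelow (· ⊆ ·) t = t.powersetCard 2 := by
    ext e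
    simp only [bipartiteBelow, mem_filter, mem_edges, mem_powersetCard]
    exact ⟨fun ⟨⟨_, _, _, he⟩, het⟩ => ⟨het, he⟩, fun ⟨het, he⟩ => ⟨⟨t, ht, het, he⟩, het⟩⟩
  rw [this, card_powersetCard, hK.1.card3 t ht]
  rfl

lemma reflTransGen_adjAt_of_mem (hK : ∀ t ∈ K, t.card = 3) {s₁ s₂ : Finset ℕ} (h₁ : s₁ ∈ K)
    (h₂ : s₂ ∈ K) {x y : ℕ} (hx₁ : x ∈ s₁) (hx₂ : x ∈ s₂) (hy₁ : y ∈ s₁) (hy₂ : y ∈ s₂)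
    (hxy : x ≠ y) : ReflTransGen (adjAt K x) s₁ s₂ := by
  rcases eq_or_ne s₁ s₂ with rfl | hne
  · exact .refl
  · exact .single ⟨h₁, h₂, hx₁, hx₂, card_inter_eq_two (hK _ h₁) (hK _ h₂) hne hx₁ hx₂ hy₁ hy₂ hxy⟩

lemma reflTransGen_adj_of_adjAt {x : ℕ} {s₁ s₂ : Finset ℕ}
    (h : ReflTransGen (adjAt K x) s₁ s₂) : ReflTransGen (adj K) s₁ s₂ :=
  ReflTransGen.mono (fun _ _ h => ⟨h.1, h.2.1, h.2.2.2.2⟩) _ _ h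

lemma card_filter_mem_eq_two_mul {x : ℕ} {ι : Type*} (I : Finset ι) (p : ι → ℕ)
    (hcover : ∀ s ∈ K, x ∈ s → ∃ i ∈ I, p i ∈ s)
    (hunique : ∀ s ∈ K, ∀ i ∈ I, ∀ j ∈ I, p i ∈ s → p j ∈ s → i = j)
    (htwo : ∀ i ∈ I, (K.filter fun s => {x, p i} ⊆ s).card = 2) :
    (K.filter (x ∈ ·)).card = 2 * I.card := by
  have : K.filter (x ∈ ·) = I.biUnion fun i => K.filter fun s => {x, p i} ⊆ s := by
    ext s
    simp only [mem_filter, mem_biUnion, insert_subset_iff, singleton_subset_iff]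
    constructor
    · rintro ⟨hs, hx⟩
      obtain ⟨i, hi, hpi⟩ := hcover s hs hx
      exact ⟨i, hi, hs, hx, hpi⟩
    · rintro ⟨i, -, hs, hx, -⟩
      exact ⟨hs, hx⟩
  rw [this, card_biUnion, sum_const_nat htwo, mul_comm]
  intro i hi j hj hij
  simp only [Function.onFun, disjoint_left, mem_filter, insert_subset_iff, singleton_subset_iff]
  exact fun s ⟨hs, _, hi'⟩ ⟨_, _, hj'⟩ => hij (hunique s hs i hi j hj hi' hj')

lemma SameSurface.refl (K : Complex) : SameSurface K K := ⟨rfl, Iff.rfl⟩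

lemma SameSurface.trans {K₁ K₂ K₃ : Complex} (h₁₂ : SameSurface K₁ K₂)
    (h₂₃ : SameSurface K₂ K₃) : SameSurface K₁ K₃ :=
  ⟨h₁₂.1.trans h₂₃.1, h₁₂.2.trans h₂₃.2⟩

end General

/- The barycentre of a `k`-simplex is labelled by the pair `(k, code of the simplex)`, so
barycentres of distinct simplices get distinct labels. -/
def vertexPt (v : ℕ) : ℕ := Nat.pair 0 v

def edgePt (e : Finset ℕ) : ℕ := Nat.pair 1 (Encodable.encode e)

def facePt (t : Finset ℕ) : ℕ := Nat.pair 2 (Encodable.encode t)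

def dim (x : ℕ) : ℕ := (Nat.unpair x).1

@[simp] lemma dim_vertexPt (v : ℕ) : dim (vertexPt v) = 0 := by simp [dim, vertexPt]

@[simp] lemma dim_edgePt (e : Finset ℕ) : dim (edgePt e) = 1 := by simp [dim, edgePt]

@[simp] lemma dim_facePt (t : Finset ℕ) : dim (facePt t) = 2 := by simp [dim, facePt]

@[simp] lemma vertexPt_inj {v w : ℕ} : vertexPt v = vertexPt w ↔ v = w := by
  simp [vertexPt, Nat.pair_eq_pair]

@[simp] lemma edgePt_inj {e e' : Finset ℕ} : edgePt e = edgePt e' ↔ e = e' := by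
  simp [edgePt, Nat.pair_eq_pair]

@[simp] lemma facePt_inj {t t' : Finset ℕ} : facePt t = facePt t' ↔ t = t' := by
  simp [facePt, Nat.pair_eq_pair]

@[simp] lemma vertexPt_ne_edgePt (v : ℕ) (e : Finset ℕ) : vertexPt v ≠ edgePt e :=
  fun h => by simpa using congrArg dim h
@[simp] lemma edgePt_ne_vertexPt (v : ℕ) (e : Finset ℕ) : edgePt e ≠ vertexPt v :=
  fun h => by simpa using congrArg dim h
@[simp] lemma vertexPt_ne_facePt (v : ℕ) (t : Finset ℕ) : vertexPt v ≠ facePt t :=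
  fun h => by simpa using congrArg dim h
@[simp] lemma facePt_ne_vertexPt (v : ℕ) (t : Finset ℕ) : facePt t ≠ vertexPt v :=
  fun h => by simpa using congrArg dim h
@[simp] lemma edgePt_ne_facePt (e t : Finset ℕ) : edgePt e ≠ facePt t :=
  fun h => by simpa using congrArg dim h
@[simp] lemma facePt_ne_edgePt (e t : Finset ℕ) : facePt t ≠ edgePt e :=
  fun h => by simpa using congrArg dim h

def flagTri (v w : ℕ) (t : Finset ℕ) : Finset ℕ := {vertexPt v, edgePt {v, w}, facePt t}

def bary (K : Complex) : Complex :=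
  K.biUnion fun t => t.offDiag.image fun p => flagTri p.1 p.2 t

structure IsFlag (K : Complex) (v w : ℕ) (t : Finset ℕ) : Prop where
  mem : t ∈ K
  left_mem : v ∈ t
  right_mem : w ∈ t
  ne : v ≠ w

section Barycentric
variable {K : Complex} {ε : ℕ → ℕ → Finset ℕ → Prop} {v w v' w' x y z : ℕ}
  {t t' s : Finset ℕ} {p : ℕ × ℕ × ℕ}

lemma isFlag_iff : IsFlag K v w t ↔ t ∈ K ∧ v ∈ t ∧ w ∈ t ∧ v ≠ w :=
  ⟨fun ⟨h₁, h₂, h₃, h₄⟩ => ⟨h₁, h₂, h₃, h₄⟩, fun ⟨h₁, h₂, h₃, h₄⟩ => ⟨h₁, h₂, h₃, h₄⟩⟩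

lemma mem_flagTri : x ∈ flagTri v w t ↔ x = vertexPt v ∨ x = edgePt {v, w} ∨ x = facePt t := by
  simp [flagTri]

@[simp] lemma vertexPt_mem_flagTri : vertexPt x ∈ flagTri v w t ↔ x = v := by simp [mem_flagTri]

@[simp] lemma edgePt_mem_flagTri {e : Finset ℕ} : edgePt e ∈ flagTri v w t ↔ e = {v, w} := by
  simp [mem_flagTri]

@[simp] lemma facePt_mem_flagTri : facePt s ∈ flagTri v w t ↔ s = t := by simp [mem_flagTri]

lemma card_flagTri : (flagTri v w t).card = 3 := by
  rw [flagTri, card_insert_of_notMem (by simp), card_pair (by simp)]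

lemma flagTri_inj (hvw : v ≠ w) (hvw' : v' ≠ w') :
    flagTri v w t = flagTri v' w' t' ↔ v = v' ∧ w = w' ∧ t = t' := by
  refine ⟨fun h => ?_, by rintro ⟨rfl, rfl, rfl⟩; rfl⟩
  have hv : vertexPt v ∈ flagTri v' w' t' := h ▸ by simp
  have he : edgePt {v, w} ∈ flagTri v' w' t' := h ▸ by simp
  have ht : facePt t ∈ flagTri v' w' t' := h ▸ by simp
  simp only [vertexPt_mem_flagTri, edgePt_mem_flagTri, facePt_mem_flagTri] at hv he ht
  subst hv ht
  rcases pair_eq_pair_iff.1 he with ⟨-, rfl⟩ | ⟨-, rfl⟩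
  · simp
  · exact absurd rfl hvw

lemma mem_bary : s ∈ bary K ↔ ∃ v w t, IsFlag K v w t ∧ flagTri v w t = s := by
  simp only [bary, isFlag_iff, mem_biUnion, mem_image, mem_offDiag, Prod.exists]
  aesop

lemma IsFlag.flagTri_mem (hf : IsFlag K v w t) : flagTri v w t ∈ bary K :=
  mem_bary.2 ⟨v, w, t, hf, rfl⟩

lemma IsFlag.swap (hf : IsFlag K v w t) : IsFlag K w v t :=
  ⟨hf.mem, hf.right_mem, hf.left_mem, hf.ne.symm⟩

lemma exists_isFlag (hK : ∀ t ∈ K, t.card = 3) (ht : t ∈ K) (hv : v ∈ t) :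
    ∃ w, IsFlag K v w t := by
  obtain ⟨w, hw, hwv⟩ := exists_mem_ne (by rw [hK t ht]; omega) v
  exact ⟨w, ht, hv, hw, hwv.symm⟩

lemma card_of_mem_bary (hs : s ∈ bary K) : s.card = 3 := by
  obtain ⟨v, w, t, -, rfl⟩ := mem_bary.1 hs
  exact card_flagTri

lemma eq_of_vertexPt_mem_of_vertexPt_mem (hs : s ∈ bary K) {a b : ℕ} (ha : vertexPt a ∈ s)
    (hb : vertexPt b ∈ s) : a = b := by
  obtain ⟨v, w, t, -, rfl⟩ := mem_bary.1 hs
  rw [vertexPt_mem_flagTri] at ha hb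
  rw [ha, hb]

lemma eq_of_facePt_mem_of_facePt_mem (hs : s ∈ bary K) {a b : Finset ℕ} (ha : facePt a ∈ s)
    (hb : facePt b ∈ s) : a = b := by
  obtain ⟨v, w, t, -, rfl⟩ := mem_bary.1 hs
  rw [facePt_mem_flagTri] at ha hb
  rw [ha, hb]

lemma filter_bary_vertexPt_edgePt (hvw : v ≠ w) :
    (bary K).filter (fun s => {vertexPt v, edgePt {v, w}} ⊆ s) =
      (K.filter (fun t => {v, w} ⊆ t)).image (flagTri v w) := by
  ext s
  simp only [mem_filter, mem_image, mem_bary, isFlag_iff, insert_subset_iff, singleton_subset_iff]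
  constructor
  · rintro ⟨⟨a, b, t, hf, rfl⟩, hva, hvwab⟩
    simp only [vertexPt_mem_flagTri, edgePt_mem_flagTri, pair_eq_pair_iff] at hva hvwab
    aesop
  · aesop

lemma filter_bary_vertexPt_facePt (ht : t ∈ K) (hv : v ∈ t) :
    (bary K).filter (fun s => {vertexPt v, facePt t} ⊆ s) = (t.erase v).image (flagTri v · t) := by
  ext s
  simp only [mem_filter, mem_image, mem_bary, isFlag_iff, mem_erase, insert_subset_iff,
    singleton_subset_iff]
  constructor
  · rintro ⟨⟨a, b, t, hf, rfl⟩, hva, hvwab⟩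
    simp only [vertexPt_mem_flagTri, facePt_mem_flagTri] at hva hvwab
    aesop
  · aesop

lemma filter_bary_edgePt_facePt (hf : IsFlag K v w t) :
    (bary K).filter (fun s => {edgePt {v, w}, facePt t} ⊆ s) =
      {flagTri v w t, flagTri w v t} := by
  ext s
  simp only [mem_filter, mem_insert, mem_singleton, mem_bary, insert_subset_iff,
    singleton_subset_iff]
  constructor
  · rintro ⟨⟨a, b, t, ⟨ht, ha, hb, hab⟩, rfl⟩, hva, hvwab⟩
    simp only [edgePt_mem_flagTri, pair_eq_pair_iff, facePt_mem_flagTri] at hva hvwab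
    aesop
  · rintro (rfl | rfl)
    · exact ⟨⟨v, w, t, hf, rfl⟩, by simp⟩
    · exact ⟨⟨w, v, t, hf.swap, rfl⟩, by simp [pair_comm]⟩

lemma IsFlag.card_filter_vertexPt_edgePt (hK : IsClosedSurface K) (hf : IsFlag K v w t) :
    ((bary K).filter fun s => {vertexPt v, edgePt {v, w}} ⊆ s).card = 2 := by
  obtain ⟨ht, hv, hw, hvw⟩ := hf
  rw [filter_bary_vertexPt_edgePt hvw,
    card_image_of_injOn fun a _ b _ h => ((flagTri_inj hvw hvw).1 h).2.2]
  exact hK.2 _ (mem_edges.2 ⟨t, ht, by simp [insert_subset_iff, *], card_pair hvw⟩)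

lemma card_filter_vertexPt_facePt (hK : ∀ t ∈ K, t.card = 3) (ht : t ∈ K) (hv : v ∈ t) :
    ((bary K).filter fun s => {vertexPt v, facePt t} ⊆ s).card = 2 := by
  rw [filter_bary_vertexPt_facePt ht hv, card_image_of_injOn, card_erase_of_mem hv, hK t ht]
  intro a ha b hb h
  exact ((flagTri_inj (mem_erase.1 ha).1.symm (mem_erase.1 hb).1.symm).1 h).2.1

lemma IsFlag.card_filter_edgePt_facePt (hf : IsFlag K v w t) :
    ((bary K).filter fun s => {edgePt {v, w}, facePt t} ⊆ s).card = 2 := by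
  rw [filter_bary_edgePt_facePt hf]
  exact card_pair fun h => hf.ne ((flagTri_inj hf.ne hf.ne.symm).1 h).1

lemma card_filter_bary_subset (hK : IsClosedSurface K) {e : Finset ℕ}
    (he : e ∈ edges (bary K)) : ((bary K).filter (e ⊆ ·)).card = 2 := by
  obtain ⟨s, hs, hes, he2⟩ := mem_edges.1 he
  obtain ⟨v, w, t, hf, rfl⟩ := mem_bary.1 hs
  rcases eq_pair_of_subset_triple hes he2 with rfl | rfl | rfl
  · exact hf.card_filter_vertexPt_edgePt hK
  · exact card_filter_vertexPt_facePt hK.1.card3 hf.mem hf.left_mem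
  · exact hf.card_filter_edgePt_facePt

lemma IsFlag.reflTransGen (hf : IsFlag K v w t) (hf' : IsFlag K v' w' t') (x y : ℕ)
    (hx : x ∈ flagTri v w t := by simp [pair_comm])
    (hx' : x ∈ flagTri v' w' t' := by simp [pair_comm])
    (hy : y ∈ flagTri v w t := by simp [pair_comm])
    (hy' : y ∈ flagTri v' w' t' := by simp [pair_comm]) (hxy : x ≠ y := by simp) :
    ReflTransGen (adjAt (bary K) x) (flagTri v w t) (flagTri v' w' t') :=
  reflTransGen_adjAt_of_mem (fun _ => card_of_mem_bary) hf.flagTri_mem hf'.flagTri_mem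
    hx hx' hy hy' hxy

lemma reflTransGen_adjAt_facePt (hf : IsFlag K v w t) (hf' : IsFlag K v' w' t) :
    ReflTransGen (adjAt (bary K) (facePt t)) (flagTri v w t) (flagTri v' w' t) := by
  rcases eq_or_ne v v' with rfl | hvv'
  · exact hf.reflTransGen hf' (facePt t) (vertexPt v)
  · have hf₁ : IsFlag K v v' t := ⟨hf.mem, hf.left_mem, hf'.left_mem, hvv'⟩
    exact ((hf.reflTransGen hf₁ (facePt t) (vertexPt v)).trans
      (hf₁.reflTransGen hf₁.swap (facePt t) (edgePt {v, v'}))).trans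
      (hf₁.swap.reflTransGen hf' (facePt t) (vertexPt v'))

lemma reflTransGen_adjAt_vertexPt (hK : IsSurface K) (hf : IsFlag K v w t)
    (hf' : IsFlag K v w' t') :
    ReflTransGen (adjAt (bary K) (vertexPt v)) (flagTri v w t) (flagTri v w' t') := by
  induction hK.link_conn v t hf.mem t' hf'.mem hf.left_mem hf'.left_mem generalizing w' with
  | refl => exact hf.reflTransGen hf' (vertexPt v) (facePt t)
  | @tail b c _ hbc ih =>
    obtain ⟨hb, hc, hvb, hvc, hbc⟩ := hbc
    obtain ⟨u, hu, huv⟩ := exists_mem_ne (by omega : 1 < (b ∩ c).card) v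
    have hfb : IsFlag K v u b := ⟨hb, hvb, (mem_inter.1 hu).1, huv.symm⟩
    have hfc : IsFlag K v u c := ⟨hc, hvc, (mem_inter.1 hu).2, huv.symm⟩
    exact ((ih hfb).trans (hfb.reflTransGen hfc (vertexPt v) (edgePt {v, u}))).trans
      (hfc.reflTransGen hf' (vertexPt v) (facePt c))

lemma bary_link_conn (hK : IsSurface K) (x : ℕ) {s₁ s₂ : Finset ℕ} (hs₁ : s₁ ∈ bary K)
    (hs₂ : s₂ ∈ bary K) (hx₁ : x ∈ s₁) (hx₂ : x ∈ s₂) : ReflTransGen (adjAt (bary K) x) s₁ s₂ := by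
  obtain ⟨v, w, t, hf, rfl⟩ := mem_bary.1 hs₁
  obtain ⟨v', w', t', hf', rfl⟩ := mem_bary.1 hs₂
  rcases mem_flagTri.1 hx₁ with rfl | rfl | rfl <;> simp only [vertexPt_mem_flagTri,
    edgePt_mem_flagTri, facePt_mem_flagTri] at hx₂
  · subst hx₂
    exact reflTransGen_adjAt_vertexPt hK hf hf'
  · rcases pair_eq_pair_iff.1 hx₂ with ⟨rfl, rfl⟩ | ⟨rfl, rfl⟩
    · exact hf.reflTransGen hf' (edgePt {v, w}) (vertexPt v)
    · exact (hf.reflTransGen hf'.swap (edgePt {v, w}) (vertexPt v)).trans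
        (hf'.swap.reflTransGen hf' (edgePt {v, w}) (facePt t'))
  · subst hx₂
    exact reflTransGen_adjAt_facePt hf hf'

lemma IsFlag.reflTransGen_adj (hK : IsSurface K) (hf : IsFlag K v w t) (hf' : IsFlag K v' w' t') :
    ReflTransGen (adj (bary K)) (flagTri v w t) (flagTri v' w' t') := by
  induction hK.conn t hf.mem t' hf'.mem generalizing v' w' with
  | refl => exact reflTransGen_adj_of_adjAt (reflTransGen_adjAt_facePt hf hf')
  | @tail b c _ hbc ih =>
    obtain ⟨hb, hc, hbc⟩ := hbc
    obtain ⟨a, u, hau, hab⟩ := card_eq_two.1 hbc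
    have ha : a ∈ b ∩ c := hab ▸ by simp
    have hu : u ∈ b ∩ c := hab ▸ by simp
    have hfb : IsFlag K a u b := ⟨hb, (mem_inter.1 ha).1, (mem_inter.1 hu).1, hau⟩
    have hfc : IsFlag K a u c := ⟨hc, (mem_inter.1 ha).2, (mem_inter.1 hu).2, hau⟩
    exact ((ih hfb).trans (reflTransGen_adj_of_adjAt
      (hfb.reflTransGen hfc (vertexPt a) (edgePt {a, u})))).trans
      (reflTransGen_adj_of_adjAt (reflTransGen_adjAt_facePt hfc hf'))

theorem isClosedSurface_bary (hK : IsClosedSurface K) : IsClosedSurface (bary K) := by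
  obtain ⟨t, ht⟩ := hK.1.nonempty
  obtain ⟨v, hv, w, hw, hvw⟩ := one_lt_card.1 (by rw [hK.1.card3 t ht]; omega : 1 < t.card)
  refine ⟨⟨⟨_, IsFlag.flagTri_mem ⟨ht, hv, hw, hvw⟩⟩, fun _ => card_of_mem_bary,
    fun e he => (card_filter_bary_subset hK he).le, fun x _ h₁ _ h₂ => bary_link_conn hK.1 x h₁ h₂,
    fun s₁ h₁ s₂ h₂ => ?_⟩, fun e he => card_filter_bary_subset hK he⟩
  obtain ⟨v, w, t, hf, rfl⟩ := mem_bary.1 h₁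
  obtain ⟨v', w', t', hf', rfl⟩ := mem_bary.1 h₂
  exact hf.reflTransGen_adj hK.1 hf'

lemma card_bary (hK : ∀ t ∈ K, t.card = 3) : (bary K).card = 6 * K.card := by
  rw [bary, card_biUnion, sum_const_nat (m := 6), mul_comm]
  · intro t ht
    rw [card_image_of_injOn, offDiag_card, hK t ht]
    rintro ⟨a, b⟩ hab ⟨c, d⟩ hcd h
    simp only [coe_offDiag, Set.mem_offDiag, mem_coe] at hab hcd
    obtain ⟨rfl, rfl, -⟩ := (flagTri_inj hab.2.2 hcd.2.2).1 h
    rfl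
  · intro t _ t' _ htt'
    simp only [Function.onFun, disjoint_left, mem_image, mem_offDiag, Prod.exists]
    rintro _ ⟨a, b, ⟨-, -, hab⟩, rfl⟩ ⟨c, d, ⟨-, -, hcd⟩, h⟩
    exact htt' ((flagTri_inj hcd hab).1 h).2.2.symm

lemma vertices_bary (hK : ∀ t ∈ K, t.card = 3) :
    vertices (bary K) = (vertices K).image vertexPt ∪ (edges K).image edgePt ∪ K.image facePt := by
  ext x
  simp only [vertices, mem_biUnion, id, mem_union, mem_image]
  constructor
  · rintro ⟨_, hs, hx⟩
    obtain ⟨v, w, t, ⟨ht, hv, hw, hvw⟩, rfl⟩ := mem_bary.1 hs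
    rcases mem_flagTri.1 hx with rfl | rfl | rfl
    · exact .inl (.inl ⟨v, ⟨t, ht, hv⟩, rfl⟩)
    · refine .inl (.inr ⟨{v, w}, mem_edges.2 ⟨t, ht, ?_, card_pair hvw⟩, rfl⟩)
      simp [insert_subset_iff, hv, hw]
    · exact .inr ⟨t, ht, rfl⟩
  · rintro ((⟨v, ⟨t, ht, hv⟩, rfl⟩ | ⟨e, he, rfl⟩) | ⟨t, ht, rfl⟩)
    · obtain ⟨w, hf⟩ := exists_isFlag hK ht hv
      exact ⟨_, hf.flagTri_mem, by simp⟩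
    · obtain ⟨t, ht, het, he2⟩ := mem_edges.1 he
      obtain ⟨v, w, hvw, rfl⟩ := card_eq_two.1 he2
      have hf : IsFlag K v w t := ⟨ht, het (by simp), het (by simp), hvw⟩
      exact ⟨_, hf.flagTri_mem, by simp⟩
    · obtain ⟨v, hv⟩ := card_pos.1 (by rw [hK t ht]; omega : 0 < t.card)
      obtain ⟨w, hf⟩ := exists_isFlag hK ht hv
      exact ⟨_, hf.flagTri_mem, by simp⟩

lemma card_vertices_bary (hK : ∀ t ∈ K, t.card = 3) :
    (vertices (bary K)).card = (vertices K).card + (edges K).card + K.card := by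
  rw [vertices_bary hK, card_union_of_disjoint, card_union_of_disjoint,
    card_image_of_injective _ fun _ _ => vertexPt_inj.1,
    card_image_of_injective _ fun _ _ => edgePt_inj.1,
    card_image_of_injective _ fun _ _ => facePt_inj.1] <;>
  simp [disjoint_left, or_imp, forall_and]

lemma card_vertices_lt_bary (hK : IsSurface K) :
    (vertices K).card < (vertices (bary K)).card := by
  rw [card_vertices_bary hK.card3]
  have := card_pos.2 hK.nonempty
  omega

theorem eulerChar_bary (hK : IsClosedSurface K) : eulerChar (bary K) = eulerChar K := by
  have hE := card_edges_mul_two hK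
  have hE' := card_edges_mul_two (isClosedSurface_bary hK)
  rw [card_bary hK.1.card3] at hE'
  simp only [eulerChar, card_vertices_bary hK.1.card3, card_bary hK.1.card3]
  omega

lemma valence_bary_vertexPt (hK : ∀ t ∈ K, t.card = 3) (v : ℕ) :
    valence (bary K) (vertexPt v) = 2 * valence K v := by
  refine card_filter_mem_eq_two_mul (K.filter (v ∈ ·)) facePt (fun s hs hvs => ?_)
    (fun s hs _ _ _ _ => eq_of_facePt_mem_of_facePt_mem hs)
    fun t ht => card_filter_vertexPt_facePt hK (mem_filter.1 ht).1 (mem_filter.1 ht).2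
  obtain ⟨a, b, t, hf, rfl⟩ := mem_bary.1 hs
  rw [vertexPt_mem_flagTri] at hvs
  exact ⟨t, mem_filter.2 ⟨hf.mem, hvs ▸ hf.left_mem⟩, by simp⟩

lemma valence_bary_edgePt (hvw : v ≠ w) :
    valence (bary K) (edgePt {v, w}) = 2 * (K.filter ({v, w} ⊆ ·)).card := by
  refine card_filter_mem_eq_two_mul _ facePt (fun s hs hes => ?_)
    (fun s hs _ _ _ _ => eq_of_facePt_mem_of_facePt_mem hs) fun t ht => ?_
  · obtain ⟨a, b, t, hf, rfl⟩ := mem_bary.1 hs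
    rw [edgePt_mem_flagTri] at hes
    refine ⟨t, mem_filter.2 ⟨hf.mem, ?_⟩, by simp⟩
    simp [hes, insert_subset_iff, hf.left_mem, hf.right_mem]
  · obtain ⟨htK, hvwt⟩ := mem_filter.1 ht
    exact IsFlag.card_filter_edgePt_facePt ⟨htK, hvwt (by simp), hvwt (by simp), hvw⟩

lemma valence_bary_facePt (hK : ∀ t ∈ K, t.card = 3) (ht : t ∈ K) :
    valence (bary K) (facePt t) = 6 := by
  rw [valence, card_filter_mem_eq_two_mul t vertexPt (fun s hs hts => ?_)
    (fun s hs _ _ _ _ => eq_of_vertexPt_mem_of_vertexPt_mem hs) fun v hv => ?_, hK t ht]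
  · obtain ⟨a, b, t', hf, rfl⟩ := mem_bary.1 hs
    rw [facePt_mem_flagTri] at hts
    exact ⟨a, hts ▸ hf.left_mem, by simp⟩
  · rw [pair_comm]
    exact card_filter_vertexPt_facePt hK ht hv

lemma even_valence_bary (hK : ∀ t ∈ K, t.card = 3) (x : ℕ) : Even (valence (bary K) x) := by
  by_cases hx : ∃ s ∈ bary K, x ∈ s
  · obtain ⟨_, hs, hxs⟩ := hx
    obtain ⟨v, w, t, hf, rfl⟩ := mem_bary.1 hs
    rcases mem_flagTri.1 hxs with rfl | rfl | rfl
    · rw [valence_bary_vertexPt hK]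
      exact even_two_mul _
    · rw [valence_bary_edgePt hf.ne]
      exact even_two_mul _
    · rw [valence_bary_facePt hK hf.mem]
      decide
  · simp only [not_exists, not_and] at hx
    simp [valence, filter_eq_empty_iff.2 hx]

theorem not_invTStep_bary (hK : ∀ t ∈ K, t.card = 3) (K' : Complex) : ¬ InvTStep (bary K) K' := by
  rintro ⟨x, hx, -⟩
  have := even_valence_bary hK x
  rw [hx] at this
  exact absurd this (by decide)

def Orients (p : ℕ × ℕ × ℕ) (t : Finset ℕ) : Prop := ({p.1, p.2.1, p.2.2} : Finset ℕ) = t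

lemma mem_dedges {a b c : ℕ} {q : ℕ × ℕ} :
    q ∈ dedges (a, b, c) ↔ q = (a, b) ∨ q = (b, c) ∨ q = (c, a) := by
  simp [dedges]

lemma Orients.distinct (hp : Orients p t) (ht : t.card = 3) :
    p.1 ≠ p.2.1 ∧ p.1 ≠ p.2.2 ∧ p.2.1 ≠ p.2.2 :=
  distinct_of_card_eq_three (hp ▸ ht)

lemma Orients.mem_of_mem_dedges (hp : Orients p t) (ht : t.card = 3) {q : ℕ × ℕ}
    (hq : q ∈ dedges p) : q.1 ∈ t ∧ q.2 ∈ t ∧ q.1 ≠ q.2 := by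
  obtain ⟨hab, hac, hbc⟩ := hp.distinct ht
  obtain ⟨a, b, c⟩ := p
  rw [← hp]
  rcases mem_dedges.1 hq with rfl | rfl | rfl <;> simp_all [eq_comm]

lemma Orients.mem_dedges_swap (hp : Orients p t) (ht : t.card = 3) (hx : x ∈ t) (hy : y ∈ t)
    (hxy : x ≠ y) : (x, y) ∈ dedges p ↔ (y, x) ∉ dedges p := by
  obtain ⟨hab, hac, hbc⟩ := hp.distinct ht
  obtain ⟨a, b, c⟩ := p
  rw [← hp] at hx hy
  simp only [mem_insert, mem_singleton] at hx hy
  simp only [mem_dedges, Prod.mk.injEq] at hab hac hbc ⊢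
  omega

lemma Orients.mem_dedges_turn (hp : Orients p t) (ht : t.card = 3) (hx : x ∈ t) (hy : y ∈ t)
    (hz : z ∈ t) (hxy : x ≠ y) (hxz : x ≠ z) (hyz : y ≠ z) :
    (x, y) ∈ dedges p ↔ (x, z) ∉ dedges p := by
  obtain ⟨hab, hac, hbc⟩ := hp.distinct ht
  obtain ⟨a, b, c⟩ := p
  rw [← hp] at hx hy hz
  simp only [mem_insert, mem_singleton] at hx hy hz
  simp only [mem_dedges, Prod.mk.injEq] at hab hac hbc ⊢
  omega

def IsCoherentOrientation (K : Complex) (o : Finset ℕ → ℕ × ℕ × ℕ) : Prop :=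
  (∀ t ∈ K, Orients (o t) t) ∧ ∀ t₁ ∈ K, ∀ t₂ ∈ K, t₁ ≠ t₂ → ∀ q ∈ dedges (o t₁), q ∉ dedges (o t₂)

lemma IsCoherentOrientation.swap_mem_dedges {o : Finset ℕ → ℕ × ℕ × ℕ}
    (ho : IsCoherentOrientation K o) (hK : ∀ t ∈ K, t.card = 3) {t₁ t₂ : Finset ℕ} (h₁ : t₁ ∈ K)
    (h₂ : t₂ ∈ K) (hne : t₁ ≠ t₂) {q : ℕ × ℕ} (hq : q ∈ dedges (o t₁)) (hq₁ : q.1 ∈ t₂)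
    (hq₂ : q.2 ∈ t₂) : q.swap ∈ dedges (o t₂) := by
  have hq' := ((ho.1 t₁ h₁).mem_of_mem_dedges (hK t₁ h₁) hq).2.2
  by_contra h
  exact ho.2 t₁ h₁ t₂ h₂ hne q hq (((ho.1 t₂ h₂).mem_dedges_swap (hK t₂ h₂) hq₁ hq₂ hq').2 h)

/-- Equivalently, a colouring of the triangles of the barycentric subdivision by two colours in
which any two triangles sharing an edge get different colours. -/
structure IsFlagSign (K : Complex) (ε : ℕ → ℕ → Finset ℕ → Prop) : Prop where
  swap : ∀ {v w t}, IsFlag K v w t → (ε v w t ↔ ¬ ε w v t)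
  turn : ∀ {v w u t}, IsFlag K v w t → IsFlag K v u t → w ≠ u → (ε v w t ↔ ¬ ε v u t)
  cross : ∀ {v w t t'}, IsFlag K v w t → IsFlag K v w t' → t ≠ t' → (ε v w t ↔ ¬ ε v w t')

lemma IsCoherentOrientation.isFlagSign {o : Finset ℕ → ℕ × ℕ × ℕ}
    (ho : IsCoherentOrientation K o) (hK : ∀ t ∈ K, t.card = 3) :
    IsFlagSign K fun v w t => (v, w) ∈ dedges (o t) where
  swap hf := (ho.1 _ hf.mem).mem_dedges_swap (hK _ hf.mem) hf.left_mem hf.right_mem hf.ne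
  turn hf hf' hwu := (ho.1 _ hf.mem).mem_dedges_turn (hK _ hf.mem) hf.left_mem hf.right_mem
    hf'.right_mem hf.ne hf'.ne hwu
  cross hf hf' htt' := by
    have hsw := (ho.1 _ hf'.mem).mem_dedges_swap (hK _ hf'.mem) hf'.right_mem hf'.left_mem
      hf'.ne.symm
    exact ⟨fun h => hsw.1 (ho.swap_mem_dedges hK hf.mem hf'.mem htt' h hf'.left_mem hf'.right_mem),
      fun h => ho.swap_mem_dedges hK hf'.mem hf.mem htt'.symm (hsw.2 h) hf.right_mem hf.left_mem⟩

lemma IsFlagSign.mem_dedges_iff (hε : IsFlagSign K ε) (ht : t ∈ K) {a b c : ℕ}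
    (habc : t = {a, b, c}) (hab : a ≠ b) (hac : a ≠ c) (hbc : b ≠ c) (h : ε a b t)
    (hf : IsFlag K v w t) : (v, w) ∈ dedges (a, b, c) ↔ ε v w t := by
  have ha : a ∈ t := by simp [habc]
  have hb : b ∈ t := by simp [habc]
  have hc : c ∈ t := by simp [habc]
  have hac' : ¬ ε a c t := (hε.turn ⟨ht, ha, hb, hab⟩ ⟨ht, ha, hc, hac⟩ hbc).1 h
  have hba : ¬ ε b a t := (hε.swap ⟨ht, ha, hb, hab⟩).1 h
  have hbc' : ε b c t :=
    not_not.1 ((hε.turn ⟨ht, hb, ha, hab.symm⟩ ⟨ht, hb, hc, hbc⟩ hac).not.1 hba)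
  have hca : ε c a t := not_not.1 ((hε.swap ⟨ht, ha, hc, hac⟩).not.1 hac')
  have hcb : ¬ ε c b t := (hε.swap ⟨ht, hb, hc, hbc⟩).1 hbc'
  obtain ⟨-, hv, hw, hvw⟩ := hf
  rw [habc, mem_insert, mem_insert, mem_singleton] at hv hw
  rw [← habc] at *
  rcases hv with rfl | rfl | rfl <;> rcases hw with rfl | rfl | rfl <;>
    simp_all [mem_dedges, eq_comm]

lemma IsFlagSign.exists_orients (hε : IsFlagSign K ε) (hK : ∀ t ∈ K, t.card = 3)
    (ht : t ∈ K) : ∃ p, Orients p t ∧ ∀ v w, IsFlag K v w t → ((v, w) ∈ dedges p ↔ ε v w t) := by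
  obtain ⟨a, b, c, hab, hac, hbc, habc⟩ := card_eq_three.1 (hK t ht)
  by_cases h : ε a b t
  · exact ⟨(a, b, c), habc.symm, fun v w => hε.mem_dedges_iff ht habc hab hac hbc h⟩
  · have hbac : t = {b, a, c} := habc.trans (insert_comm _ _ _)
    have h' : ε b a t := not_not.1 ((hε.swap ⟨ht, by simp [habc], by simp [habc], hab⟩).not.1 h)
    exact ⟨(b, a, c), hbac.symm, fun v w => hε.mem_dedges_iff ht hbac hab.symm hbc hac h'⟩

lemma IsFlagSign.orientable (hε : IsFlagSign K ε) (hK : ∀ t ∈ K, t.card = 3) : Orientable K := by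
  choose! o ho using fun t (ht : t ∈ K) => hε.exists_orients hK ht
  refine ⟨o, fun t ht => (ho t ht).1, fun t₁ h₁ t₂ h₂ hne q hq₁ hq₂ => ?_⟩
  obtain ⟨hx, hy, hxy⟩ := (ho t₁ h₁).1.mem_of_mem_dedges (hK t₁ h₁) hq₁
  obtain ⟨hx', hy', -⟩ := (ho t₂ h₂).1.mem_of_mem_dedges (hK t₂ h₂) hq₂
  have hf₁ : IsFlag K q.1 q.2 t₁ := ⟨h₁, hx, hy, hxy⟩
  have hf₂ : IsFlag K q.1 q.2 t₂ := ⟨h₂, hx', hy', hxy⟩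
  exact (hε.cross hf₁ hf₂ hne).1 (((ho t₁ h₁).2 _ _ hf₁).1 hq₁) (((ho t₂ h₂).2 _ _ hf₂).1 hq₂)

/-- Barycentres ordered by dimension `0 → 1 → 2 → 0`: in a triangle of the barycentric
subdivision, either all three edges of an orientation ascend or none does. -/
def IsAscending (q : ℕ × ℕ) : Prop := dim q.2 = (dim q.1 + 1) % 3

lemma isAscending_swap (hx : x ∈ flagTri v w t) (hy : y ∈ flagTri v w t) (hxy : x ≠ y) :
    IsAscending (y, x) ↔ ¬ IsAscending (x, y) := by
  rcases mem_flagTri.1 hx with rfl | rfl | rfl <;> rcases mem_flagTri.1 hy with rfl | rfl | rfl <;>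
    simp_all [IsAscending]

lemma Orients.mem_dedges_flagTri_iff (hp : Orients p (flagTri v w t)) {q : ℕ × ℕ}
    (hq : q ∈ dedges p) : (vertexPt v, edgePt {v, w}) ∈ dedges p ↔ IsAscending q := by
  obtain ⟨hab, hac, hbc⟩ := hp.distinct card_flagTri
  obtain ⟨a, b, c⟩ := p
  have ha : a ∈ flagTri v w t := hp ▸ by simp
  have hb : b ∈ flagTri v w t := hp ▸ by simp
  have hc : c ∈ flagTri v w t := hp ▸ by simp
  rw [mem_flagTri] at ha hb hc
  rw [mem_dedges] at hq
  rcases ha with rfl | rfl | rfl <;> rcases hb with rfl | rfl | rfl <;>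
    rcases hc with rfl | rfl | rfl <;> rcases hq with rfl | rfl | rfl <;>
    simp_all [mem_dedges, IsAscending]

lemma IsCoherentOrientation.bary_sign_iff {o : Finset ℕ → ℕ × ℕ × ℕ}
    (ho : IsCoherentOrientation (bary K) o) (hf : IsFlag K v w t) (hf' : IsFlag K v' w' t')
    (hne : flagTri v w t ≠ flagTri v' w' t') (x y : ℕ)
    (hx : x ∈ flagTri v w t := by simp [pair_comm])
    (hx' : x ∈ flagTri v' w' t' := by simp [pair_comm])
    (hy : y ∈ flagTri v w t := by simp [pair_comm])
    (hy' : y ∈ flagTri v' w' t' := by simp [pair_comm]) (hxy : x ≠ y := by simp) :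
    (vertexPt v, edgePt {v, w}) ∈ dedges (o (flagTri v w t)) ↔
      (vertexPt v', edgePt {v', w'}) ∉ dedges (o (flagTri v' w' t')) := by
  have hp := ho.1 _ hf.flagTri_mem
  have main : ∀ q ∈ dedges (o (flagTri v w t)), q.1 ∈ flagTri v' w' t' →
      q.2 ∈ flagTri v' w' t' → ((vertexPt v, edgePt {v, w}) ∈ dedges (o (flagTri v w t)) ↔
        (vertexPt v', edgePt {v', w'}) ∉ dedges (o (flagTri v' w' t'))) := by
    intro q hq hq₁ hq₂
    have hq' := ho.swap_mem_dedges (fun _ => card_of_mem_bary) hf.flagTri_mem hf'.flagTri_mem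
      hne hq hq₁ hq₂
    obtain ⟨h₁, h₂, h₁₂⟩ := hp.mem_of_mem_dedges card_flagTri hq
    rw [hp.mem_dedges_flagTri_iff hq, (ho.1 _ hf'.flagTri_mem).mem_dedges_flagTri_iff hq',
      Prod.swap, isAscending_swap h₁ h₂ h₁₂, not_not]
  by_cases h : (x, y) ∈ dedges (o (flagTri v w t))
  · exact main _ h hx' hy'
  · exact main (y, x) ((hp.mem_dedges_swap card_flagTri hy hx hxy.symm).2 h) hy' hx'

lemma IsCoherentOrientation.isFlagSign_bary {o : Finset ℕ → ℕ × ℕ × ℕ}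
    (ho : IsCoherentOrientation (bary K) o) :
    IsFlagSign K fun v w t => (vertexPt v, edgePt {v, w}) ∈ dedges (o (flagTri v w t)) where
  swap {v w t} hf := ho.bary_sign_iff hf hf.swap
    (fun h => hf.ne ((flagTri_inj hf.ne hf.ne.symm).1 h).1) (edgePt {v, w}) (facePt t)
  turn {v _ _ t} hf hf' hwu := ho.bary_sign_iff hf hf'
    (fun h => hwu ((flagTri_inj hf.ne hf'.ne).1 h).2.1) (vertexPt v) (facePt t)
  cross {v w _ _} hf hf' htt' := ho.bary_sign_iff hf hf'
    (fun h => htt' ((flagTri_inj hf.ne hf'.ne).1 h).2.2) (vertexPt v) (edgePt {v, w})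

lemma IsFlagSign.iff_not_of_mem (hε : IsFlagSign K ε) (hf : IsFlag K v w t)
    (hf' : IsFlag K v' w' t') (hne : flagTri v w t ≠ flagTri v' w' t') (hx : x ∈ flagTri v w t)
    (hx' : x ∈ flagTri v' w' t') (hy : y ∈ flagTri v w t) (hy' : y ∈ flagTri v' w' t')
    (hxy : x ≠ y) : ε v w t ↔ ¬ ε v' w' t' := by
  have hcross : v = v' → ({v, w} : Finset ℕ) = {v', w'} → (ε v w t ↔ ¬ ε v' w' t') := by
    rintro rfl he
    obtain rfl : w = w' := by
      rcases pair_eq_pair_iff.1 he with ⟨-, h⟩ | ⟨-, rfl⟩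
      exacts [h, absurd rfl hf.ne]
    exact hε.cross hf hf' fun h => hne (h ▸ rfl)
  have hturn : v = v' → t = t' → (ε v w t ↔ ¬ ε v' w' t') := by
    rintro rfl rfl
    exact hε.turn hf hf' fun h => hne (h ▸ rfl)
  have hswap : ({v, w} : Finset ℕ) = {v', w'} → t = t' → (ε v w t ↔ ¬ ε v' w' t') := by
    rintro he rfl
    rcases pair_eq_pair_iff.1 he with ⟨rfl, rfl⟩ | ⟨rfl, rfl⟩
    exacts [absurd rfl hne, hε.swap hf]
  rcases mem_flagTri.1 hx with rfl | rfl | rfl <;> rcases mem_flagTri.1 hy with rfl | rfl | rfl <;>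
    simp only [vertexPt_mem_flagTri, edgePt_mem_flagTri, facePt_mem_flagTri] at hx' hy' <;>
    first
    | exact absurd rfl hxy
    | exact hcross hx' hy'
    | exact hcross hy' hx'
    | exact hturn hx' hy'
    | exact hturn hy' hx'
    | exact hswap hx' hy'
    | exact hswap hy' hx'

lemma IsFlagSign.orientable_bary (hε : IsFlagSign K ε) : Orientable (bary K) := by
  classical
  have hex : ∀ s ∈ bary K, ∃ p, Orients p s ∧ ∀ v w t, IsFlag K v w t → flagTri v w t = s →
      ((vertexPt v, edgePt {v, w}) ∈ dedges p ↔ ε v w t) := by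
    intro s hs
    obtain ⟨v, w, t, hf, rfl⟩ := mem_bary.1 hs
    refine ⟨if ε v w t then (vertexPt v, edgePt {v, w}, facePt t)
      else (edgePt {v, w}, vertexPt v, facePt t), ?_, fun v' w' t' hf' h => ?_⟩
    · split_ifs
      exacts [rfl, insert_comm _ _ _]
    · obtain ⟨rfl, rfl, rfl⟩ := (flagTri_inj hf'.ne hf.ne).1 h
      split_ifs with hε' <;> simp [mem_dedges, hε']
  choose! o ho using hex
  refine ⟨o, fun s hs => (ho s hs).1, fun s₁ h₁ s₂ h₂ hne q hq₁ hq₂ => ?_⟩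
  obtain ⟨v, w, t, hf, rfl⟩ := mem_bary.1 h₁
  obtain ⟨v', w', t', hf', rfl⟩ := mem_bary.1 h₂
  obtain ⟨hx, hy, hxy⟩ := (ho _ h₁).1.mem_of_mem_dedges card_flagTri hq₁
  obtain ⟨hx', hy', -⟩ := (ho _ h₂).1.mem_of_mem_dedges card_flagTri hq₂
  have h₁ := ((ho _ h₁).2 v w t hf rfl).symm.trans ((ho _ h₁).1.mem_dedges_flagTri_iff hq₁)
  have h₂ := ((ho _ h₂).2 v' w' t' hf' rfl).symm.trans ((ho _ h₂).1.mem_dedges_flagTri_iff hq₂)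
  have := hε.iff_not_of_mem hf hf' hne hx hx' hy hy' hxy
  tauto

theorem orientable_bary_iff (hK : ∀ t ∈ K, t.card = 3) : Orientable (bary K) ↔ Orientable K :=
  ⟨fun ⟨_, (ho : IsCoherentOrientation _ _)⟩ => ho.isFlagSign_bary.orientable hK,
    fun ⟨_, (ho : IsCoherentOrientation _ _)⟩ => (ho.isFlagSign hK).orientable_bary⟩

theorem sameSurface_bary (hK : IsClosedSurface K) : SameSurface (bary K) K :=
  ⟨eulerChar_bary hK, orientable_bary_iff hK.1.card3⟩

end Barycentric

/-- every closed surface admits roots with arbitrarily many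
vertices. -/
theorem infinitely_many_roots (K : Complex) (h : IsClosedSurface K) (n : ℕ) :
    ∃ R, IsClosedSurface R ∧ SameSurface R K ∧
      (∀ R', ¬ InvTStep R R') ∧ n < (vertices R).card := by
  obtain ⟨R, hR, hRK, hn⟩ : ∃ R, IsClosedSurface R ∧ SameSurface R K ∧ n ≤ (vertices R).card := by
    induction n with
    | zero => exact ⟨K, h, .refl K, Nat.zero_le _⟩
    | succ m ih =>
      obtain ⟨R, hR, hRK, hm⟩ := ih
      exact ⟨bary R, isClosedSurface_bary hR, (sameSurface_bary hR).trans hRK,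
        hm.trans_lt (card_vertices_lt_bary hR.1)⟩
  exact ⟨bary R, isClosedSurface_bary hR, (sameSurface_bary hR).trans hRK,
    not_invTStep_bary hR.1.card3, hn.trans_lt (card_vertices_lt_bary hR.1)⟩

end Tri
end
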